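/- There exists a constant M > 0 such that for every continuously differentiable, compactly supported function φ : ℝ² → ℝ one has ‖φ‖_{L⁴(ℝ²)} ≤ M ‖φ‖_{L²(ℝ²)}^{1/2} ( ‖φ‖_{L²(ℝ²)}² + ‖∇φ‖_{L²(ℝ²)}² )^{1/4}, i.e. ‖φ‖_{L⁴} ≤ M ‖φ‖_{L²}^{1/2} ‖φ‖_{H¹}^{1/2} where ‖φ‖_{H¹} := (‖φ‖_{L²}² + ‖∇φ‖_{L²}²)^{1/2}. -/

import Mathlib

/-!
Apply the `L¹` Gagliardo–Nirenberg–Sobolev inequality in dimension two, `‖u‖_{L²} ≲ ‖∇u‖_{L¹}`,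
to `u = φ²`. Since `‖φ²‖_{L²} = ‖φ‖_{L⁴}²` and `∇(φ²) = 2φ∇φ`, Cauchy–Schwarz gives
`‖φ‖_{L⁴}² ≲ ‖φ‖_{L²} ‖∇φ‖_{L²}`, and `‖∇φ‖_{L²} ≤ ‖φ‖_{H¹}`.
-/

open MeasureTheory ENNReal

theorem eLpNorm_mul_self {α : Type*} [MeasurableSpace α] (μ : Measure α) (f : α → ℝ)
    (p : ℝ≥0∞) : eLpNorm (fun x => f x * f x) p μ = eLpNorm f (p * 2) μ ^ 2 := by
  have hnorm_sq : (fun x => f x * f x) = fun x => ‖f x‖ ^ (2 : ℝ) := by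
    funext x
    rw [Real.rpow_two, Real.norm_eq_abs, sq_abs, sq]
  rw [hnorm_sq, eLpNorm_norm_rpow f two_pos, ENNReal.rpow_two, ENNReal.ofReal_ofNat]

section

variable {E : Type*} [NormedAddCommGroup E] [NormedSpace ℝ E]

theorem fderiv_mul_self {φ : E → ℝ} {x : E} (hφ : DifferentiableAt ℝ φ x) :
    fderiv ℝ (fun y => φ y * φ y) x = (2 * φ x) • fderiv ℝ φ x := by
  rw [fderiv_fun_mul hφ hφ, two_mul, add_smul]

variable [MeasurableSpace E] [BorelSpace E] [FiniteDimensional ℝ E]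

theorem eLpNorm_fderiv_mul_self_one_le (μ : Measure E) {φ : E → ℝ} (hφ : ContDiff ℝ 1 φ) :
    eLpNorm (fderiv ℝ fun x => φ x * φ x) 1 μ ≤
      2 * eLpNorm φ 2 μ * eLpNorm (fderiv ℝ φ) 2 μ := by
  have hderiv : (fderiv ℝ fun x => φ x * φ x) = (fun x => 2 * φ x) • fderiv ℝ φ := by
    funext x
    exact fderiv_mul_self (hφ.differentiable one_ne_zero x)
  have htwo : eLpNorm (fun x => 2 * φ x) 2 μ = 2 * eLpNorm φ 2 μ := by
    rw [show (fun x => 2 * φ x) = (2 : ℝ) • φ from rfl, eLpNorm_const_smul]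
    simp [enorm]
  rw [hderiv, ← htwo]
  have : HolderTriple 2 2 1 := ⟨by rw [ENNReal.inv_two_add_inv_two, inv_one]⟩
  exact eLpNorm_smul_le_mul_eLpNorm (hφ.continuous_fderiv one_ne_zero).aestronglyMeasurable
    (continuous_const.mul hφ.continuous).aestronglyMeasurable

theorem eLpNorm_four_sq_le (μ : Measure E) [μ.IsAddHaarMeasure]
    (hE : Module.finrank ℝ E = 2) {φ : E → ℝ} (hφ : ContDiff ℝ 1 φ) (h2φ : HasCompactSupport φ) :
    eLpNorm φ 4 μ ^ 2 ≤
      eLpNormLESNormFDerivOneConst μ 2 * (2 * eLpNorm φ 2 μ * eLpNorm (fderiv ℝ φ) 2 μ) := by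
  have hconj : NNReal.HolderConjugate (Module.finrank ℝ E) 2 := by
    rw [hE]
    exact NNReal.HolderConjugate.two_two
  calc eLpNorm φ 4 μ ^ 2 = eLpNorm (fun x => φ x * φ x) 2 μ := by
        rw [eLpNorm_mul_self]; norm_num
    _ ≤ eLpNormLESNormFDerivOneConst μ 2 * eLpNorm (fderiv ℝ fun x => φ x * φ x) 1 μ :=
        eLpNorm_le_eLpNorm_fderiv_one μ (hφ.mul hφ) h2φ.mul_right hconj
    _ ≤ _ := by gcongr; exact eLpNorm_fderiv_mul_self_one_le μ hφ

end

theorem Real.sqrt_le_rpow_quarter_sq_add_sq {b c : ℝ} (hc : 0 ≤ c) :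
    √c ≤ (b ^ 2 + c ^ 2) ^ ((1 : ℝ) / 4) := by
  have hquarter : √c = (c ^ 2) ^ ((1 : ℝ) / 4) := by
    rw [Real.sqrt_eq_rpow, ← Real.rpow_natCast, ← Real.rpow_mul hc]
    norm_num
  rw [hquarter]
  gcongr
  exact le_add_of_nonneg_left (sq_nonneg b)

theorem Real.le_sqrt_mul_rpow_half_mul_rpow_quarter {K a b c : ℝ} (hb : 0 ≤ b) (hc : 0 ≤ c)
    (h : a ^ 2 ≤ K * (b * c)) :
    a ≤ √K * b ^ ((1 : ℝ) / 2) * (b ^ 2 + c ^ 2) ^ ((1 : ℝ) / 4) := by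
  calc a ≤ √(K * (b * c)) := (le_abs_self a).trans (Real.abs_le_sqrt h)
    _ = √K * b ^ ((1 : ℝ) / 2) * √c := by
        rw [Real.sqrt_mul' K (mul_nonneg hb hc), Real.sqrt_mul hb, Real.sqrt_eq_rpow b, mul_assoc]
    _ ≤ _ := by gcongr; exact Real.sqrt_le_rpow_quarter_sq_add_sq hc

/-- **Gagliardo–Nirenberg (Ladyzhenskaya) inequality in ℝ².**
There is a constant `M > 0` such that every `C¹` compactly supported
`φ : ℝ² → ℝ` satisfies `‖φ‖_{L⁴} ≤ M ‖φ‖_{L²}^{1/2} ‖φ‖_{H¹}^{1/2}`,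
where `‖φ‖_{H¹} = (‖φ‖_{L²}² + ‖∇φ‖_{L²}²)^{1/2}`. -/
theorem gagliardo_nirenberg_dim_two :
    ∃ M : ℝ, 0 < M ∧
      ∀ φ : EuclideanSpace ℝ (Fin 2) → ℝ,
        ContDiff ℝ 1 φ → HasCompactSupport φ →
        (eLpNorm φ 4 volume).toReal ≤
          M * ((eLpNorm φ 2 volume).toReal) ^ ((1 : ℝ)/2) *
            (((eLpNorm φ 2 volume).toReal) ^ 2 +
              ((eLpNorm (fun x => ‖fderiv ℝ φ x‖) 2 volume).toReal) ^ 2) ^ ((1 : ℝ)/4) := by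
  set C : ℝ := ↑(eLpNormLESNormFDerivOneConst (volume : Measure (EuclideanSpace ℝ (Fin 2))) 2)
  refine ⟨√(2 * C) + 1, by positivity, fun φ hφ h2φ => ?_⟩
  have hφ_fin : eLpNorm φ 2 volume ≠ ⊤ :=
    (hφ.continuous.memLp_of_hasCompactSupport h2φ).eLpNorm_ne_top
  have hdφ_fin : eLpNorm (fderiv ℝ φ) 2 volume ≠ ⊤ :=
    ((hφ.continuous_fderiv one_ne_zero).memLp_of_hasCompactSupport (h2φ.fderiv ℝ)).eLpNorm_ne_top
  have hsq : (eLpNorm φ 4 volume).toReal ^ 2 ≤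
      C * (2 * (eLpNorm φ 2 volume).toReal * (eLpNorm (fderiv ℝ φ) 2 volume).toReal) := by
    simpa only [toReal_pow, toReal_mul, toReal_ofNat, coe_toReal] using ENNReal.toReal_mono
      (by finiteness) (eLpNorm_four_sq_le volume finrank_euclideanSpace_fin hφ h2φ)
  rw [eLpNorm_norm]
  calc _ ≤ √(2 * C) * _ * _ := Real.le_sqrt_mul_rpow_half_mul_rpow_quarter
        (c := (eLpNorm (fderiv ℝ φ) 2 volume).toReal) ENNReal.toReal_nonneg ENNReal.toReal_nonneg
        (hsq.trans_eq (by ring))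
    _ ≤ _ := by gcongr; linarith
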